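/- Let k be a positive integer, let g1, g2 each be either a linear defining function g(x, θ) = ⟨x, θ⟩ with θ in the unit sphere or a circular defining function g(x, θ) = ‖x − rθ‖₂ with radius r > 0 and θ in the unit sphere, and let ψ = (ψ1, ψ2) ∈ S^1. Then for any Borel probability measure μ on ℝ^{d1} × ℝ^{d2}, the k-th absolute moment of the pushforward of μ under T_{θ1,θ2,ψ}(x1, x2) = ψ1 g1(x1, θ1) + ψ2 g2(x2, θ2) satisfies ∫_ℝ |t|^k d(T_{θ1,θ2,ψ}♯μ)(t) ≤ Σ_{i=0}^{k} k^i C_{g1,g2}^{k−i} M_i(μ), where M_i(μ) = ∫ (‖x1‖₁ + ‖x2‖₁)^i dμ(x1, x2) and C_{g1,g2} is the sum of the radii of the circular defining functions among g1, g2 (equal to 0 if both are linear). (Moment bound for HHRT pushforwards from the proof of Proposition 4.) -/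

import Mathlib

open MeasureTheory ENNReal
open scoped RealInnerProductSpace

noncomputable section

/-- `Euc d` is the Euclidean space `ℝ^d`. -/
abbrev Euc (d : ℕ) := EuclideanSpace ℝ (Fin d)

/-- The HHRT projection map `T_{θ1,θ2,ψ}(x1,x2) = ψ1 g1(x1,θ1) + ψ2 g2(x2,θ2)`. -/
def Tmap {d1 d2 : ℕ} {Ω1 Ω2 : Type*} (g1 : Euc d1 → Ω1 → ℝ) (g2 : Euc d2 → Ω2 → ℝ)
    (θ1 : Ω1) (θ2 : Ω2) (ψ : Metric.sphere (0 : Euc 2) 1) (z : Euc d1 × Euc d2) : ℝ :=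
  (ψ : Euc 2) 0 * g1 z.1 θ1 + (ψ : Euc 2) 1 * g2 z.2 θ2

/-- The ℓ¹ norm on `ℝ^d`. -/
def l1norm {d : ℕ} (x : Euc d) : ℝ := ∑ i, |x i|

/-!
Both kinds of defining function satisfy `|g(x, θ)| ≤ ‖x‖₁ + r` (Cauchy–Schwarz, resp. the triangle
inequality, together with `‖x‖₂ ≤ ‖x‖₁`), and `|ψ₁|, |ψ₂| ≤ 1`, so
`|T(x₁, x₂)| ≤ L + C` with `L = ‖x₁‖₁ + ‖x₂‖₁` and `C = r₁ + r₂`. Expanding `(L + C)^k` binomially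
and bounding `binom k i ≤ k^i` gives the claim after integrating term by term.
-/

lemma l1norm_nonneg {d : ℕ} (x : Euc d) : 0 ≤ l1norm x :=
  Finset.sum_nonneg fun _ _ => abs_nonneg _

lemma norm_le_l1norm {d : ℕ} (x : Euc d) : ‖x‖ ≤ l1norm x :=
  calc ‖x‖ = ‖∑ i, x i • EuclideanSpace.single i (1 : ℝ)‖ := by
        conv_lhs => rw [← (EuclideanSpace.basisFun (Fin d) ℝ).sum_repr x]
        simp
    _ ≤ ∑ i, ‖x i • EuclideanSpace.single i (1 : ℝ)‖ := norm_sum_le _ _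
    _ = l1norm x := by simp [l1norm, norm_smul, PiLp.norm_single]

lemma continuous_l1norm {d : ℕ} : Continuous (l1norm (d := d)) :=
  continuous_finsetSum _ fun i _ => (EuclideanSpace.proj i).continuous.abs

/-- `g` is a linear defining function (encoded by `r = 0`) or a circular one of radius `r > 0`. -/
def IsDefiningFunction {d : ℕ} (g : Euc d → Metric.sphere (0 : Euc d) 1 → ℝ) (r : ℝ) : Prop :=
  (r = 0 ∧ ∀ x θ, g x θ = ⟪x, (θ : Euc d)⟫) ∨ (0 < r ∧ ∀ x θ, g x θ = ‖x - r • (θ : Euc d)‖)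

namespace IsDefiningFunction

variable {d : ℕ} {g : Euc d → Metric.sphere (0 : Euc d) 1 → ℝ} {r : ℝ}

lemma radius_nonneg (hg : IsDefiningFunction g r) : 0 ≤ r := by
  rcases hg with ⟨hr, -⟩ | ⟨hr, -⟩
  exacts [hr.ge, hr.le]

lemma continuous (hg : IsDefiningFunction g r) (θ : Metric.sphere (0 : Euc d) 1) :
    Continuous fun x => g x θ := by
  rcases hg with ⟨-, hlin⟩ | ⟨-, hcirc⟩
  · simp only [hlin]
    fun_prop
  · simp only [hcirc]
    fun_prop

lemma abs_le_l1norm_add (hg : IsDefiningFunction g r) (θ : Metric.sphere (0 : Euc d) 1)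
    (x : Euc d) : |g x θ| ≤ l1norm x + r := by
  have hθ : ‖(θ : Euc d)‖ = 1 := norm_eq_of_mem_sphere θ
  rcases hg with ⟨rfl, hlin⟩ | ⟨hr, hcirc⟩
  · calc |g x θ| ≤ ‖x‖ * ‖(θ : Euc d)‖ := hlin x θ ▸ abs_real_inner_le_norm _ _
      _ ≤ l1norm x + 0 := by rw [hθ, mul_one, add_zero]; exact norm_le_l1norm x
  · calc |g x θ| ≤ ‖x‖ + ‖r • (θ : Euc d)‖ := by
          rw [hcirc, abs_norm]; exact norm_sub_le _ _
      _ ≤ l1norm x + r := by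
          rw [norm_smul, hθ, Real.norm_of_nonneg hr.le, mul_one]
          gcongr
          exact norm_le_l1norm x

end IsDefiningFunction

section Tmap

variable {d1 d2 : ℕ} {Ω1 Ω2 : Type*} {g1 : Euc d1 → Ω1 → ℝ} {g2 : Euc d2 → Ω2 → ℝ}
  {θ1 : Ω1} {θ2 : Ω2}

lemma continuous_Tmap (hg1 : Continuous fun x => g1 x θ1) (hg2 : Continuous fun x => g2 x θ2)
    (ψ : Metric.sphere (0 : Euc 2) 1) : Continuous (Tmap g1 g2 θ1 θ2 ψ) :=
  (continuous_const.mul (hg1.comp continuous_fst)).add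
    (continuous_const.mul (hg2.comp continuous_snd))

lemma abs_Tmap_le {a1 : Euc d1 → ℝ} {a2 : Euc d2 → ℝ} (h1 : ∀ x, |g1 x θ1| ≤ a1 x)
    (h2 : ∀ x, |g2 x θ2| ≤ a2 x) (ψ : Metric.sphere (0 : Euc 2) 1) (z : Euc d1 × Euc d2) :
    |Tmap g1 g2 θ1 θ2 ψ z| ≤ a1 z.1 + a2 z.2 := by
  have hψ : ∀ i, |(ψ : Euc 2) i| ≤ 1 := fun i =>
    (PiLp.norm_apply_le (ψ : Euc 2) i).trans (norm_eq_of_mem_sphere ψ).le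
  calc |Tmap g1 g2 θ1 θ2 ψ z|
      ≤ |(ψ : Euc 2) 0| * |g1 z.1 θ1| + |(ψ : Euc 2) 1| * |g2 z.2 θ2| := by
        rw [← abs_mul, ← abs_mul]; exact abs_add_le _ _
    _ ≤ 1 * a1 z.1 + 1 * a2 z.2 :=
        add_le_add (mul_le_mul (hψ 0) (h1 _) (abs_nonneg _) zero_le_one)
          (mul_le_mul (hψ 1) (h2 _) (abs_nonneg _) zero_le_one)
    _ = a1 z.1 + a2 z.2 := by ring

end Tmap

lemma ENNReal.add_pow_le_sum_natCast_pow_mul (a c : ℝ≥0∞) (k : ℕ) :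
    (a + c) ^ k ≤ ∑ i ∈ Finset.range (k + 1), (k : ℝ≥0∞) ^ i * c ^ (k - i) * a ^ i := by
  rw [add_pow]
  refine Finset.sum_le_sum fun i _ => ?_
  calc a ^ i * c ^ (k - i) * (k.choose i : ℝ≥0∞)
      ≤ a ^ i * c ^ (k - i) * (k : ℝ≥0∞) ^ i := by
        gcongr
        exact_mod_cast Nat.choose_le_pow k i
    _ = (k : ℝ≥0∞) ^ i * c ^ (k - i) * a ^ i := by ring

lemma lintegral_pow_le_sum_of_le_add {α : Type*} [MeasurableSpace α] {μ : Measure α}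
    {f L : α → ℝ≥0∞} {c : ℝ≥0∞} (hL : Measurable L) (hf : ∀ x, f x ≤ L x + c) (k : ℕ) :
    ∫⁻ x, f x ^ k ∂μ ≤
      ∑ i ∈ Finset.range (k + 1), (k : ℝ≥0∞) ^ i * c ^ (k - i) * ∫⁻ x, L x ^ i ∂μ :=
  calc ∫⁻ x, f x ^ k ∂μ
      ≤ ∫⁻ x, ∑ i ∈ Finset.range (k + 1), (k : ℝ≥0∞) ^ i * c ^ (k - i) * L x ^ i ∂μ :=
        lintegral_mono fun x =>
          (pow_le_pow_left' (hf x) k).trans (ENNReal.add_pow_le_sum_natCast_pow_mul _ _ _)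
    _ = ∑ i ∈ Finset.range (k + 1), (k : ℝ≥0∞) ^ i * c ^ (k - i) * ∫⁻ x, L x ^ i ∂μ := by
        rw [lintegral_finsetSum _ fun i _ => (hL.pow_const i).const_mul _]
        simp only [lintegral_const_mul _ (hL.pow_const _)]

theorem hhrt_pushforward_moment_bound_general (d1 d2 : ℕ) (k : ℕ)
    (g1 : Euc d1 → Metric.sphere (0 : Euc d1) 1 → ℝ)
    (g2 : Euc d2 → Metric.sphere (0 : Euc d2) 1 → ℝ) (r1 r2 : ℝ)
    (hg1 : (r1 = 0 ∧ ∀ x θ, g1 x θ = ⟪x, (θ : Euc d1)⟫) ∨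
      (0 < r1 ∧ ∀ x θ, g1 x θ = ‖x - r1 • (θ : Euc d1)‖))
    (hg2 : (r2 = 0 ∧ ∀ x θ, g2 x θ = ⟪x, (θ : Euc d2)⟫) ∨
      (0 < r2 ∧ ∀ x θ, g2 x θ = ‖x - r2 • (θ : Euc d2)‖))
    (θ1 : Metric.sphere (0 : Euc d1) 1) (θ2 : Metric.sphere (0 : Euc d2) 1)
    (ψ : Metric.sphere (0 : Euc 2) 1)
    (μ : Measure (Euc d1 × Euc d2)) :
    ∫⁻ t : ℝ, (ENNReal.ofReal |t|) ^ k ∂(μ.map (Tmap g1 g2 θ1 θ2 ψ))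
      ≤ ∑ i ∈ Finset.range (k + 1),
          (k : ℝ≥0∞) ^ i * ENNReal.ofReal (r1 + r2) ^ (k - i) *
            ∫⁻ z : Euc d1 × Euc d2,
              (ENNReal.ofReal (l1norm z.1 + l1norm z.2)) ^ i ∂μ := by
  have hT : Continuous (Tmap g1 g2 θ1 θ2 ψ) :=
    continuous_Tmap (IsDefiningFunction.continuous hg1 θ1)
      (IsDefiningFunction.continuous hg2 θ2) ψ
  rw [lintegral_map (measurable_abs.ennreal_ofReal.pow_const k) hT.measurable]
  refine lintegral_pow_le_sum_of_le_add ?_ (fun z => ?_) k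
  · exact ((continuous_l1norm.comp continuous_fst).add
      (continuous_l1norm.comp continuous_snd)).measurable.ennreal_ofReal
  · have hTz := abs_Tmap_le (IsDefiningFunction.abs_le_l1norm_add hg1 θ1)
      (IsDefiningFunction.abs_le_l1norm_add hg2 θ2) ψ z
    rw [← ENNReal.ofReal_add (add_nonneg (l1norm_nonneg _) (l1norm_nonneg _))
      (add_nonneg (IsDefiningFunction.radius_nonneg hg1) (IsDefiningFunction.radius_nonneg hg2))]
    exact ENNReal.ofReal_le_ofReal (by linarith)

/-- **Moment bound for HHRT pushforwards (from the proof of Proposition 4)**: for linear or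
circular defining functions `g1, g2` (with radii `r1, r2`, a radius being `0` for a linear
defining function) and any `ψ ∈ S^1`, the `k`-th absolute moment of the pushforward of a
Borel probability measure `μ` on `ℝ^{d1} × ℝ^{d2}` under `T_{θ1,θ2,ψ}` is at most
`Σ_{i=0}^k k^i C_{g1,g2}^{k−i} M_i(μ)`, where `M_i(μ) = ∫ (‖x1‖₁ + ‖x2‖₁)^i dμ` and
`C_{g1,g2} = r1 + r2`. -/
theorem hhrt_pushforward_moment_bound (d1 d2 : ℕ) (k : ℕ) (hk : 1 ≤ k)
    (g1 : Euc d1 → Metric.sphere (0 : Euc d1) 1 → ℝ)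
    (g2 : Euc d2 → Metric.sphere (0 : Euc d2) 1 → ℝ) (r1 r2 : ℝ)
    (hg1 : (r1 = 0 ∧ ∀ x θ, g1 x θ = ⟪x, (θ : Euc d1)⟫) ∨
      (0 < r1 ∧ ∀ x θ, g1 x θ = ‖x - r1 • (θ : Euc d1)‖))
    (hg2 : (r2 = 0 ∧ ∀ x θ, g2 x θ = ⟪x, (θ : Euc d2)⟫) ∨
      (0 < r2 ∧ ∀ x θ, g2 x θ = ‖x - r2 • (θ : Euc d2)‖))
    (θ1 : Metric.sphere (0 : Euc d1) 1) (θ2 : Metric.sphere (0 : Euc d2) 1)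
    (ψ : Metric.sphere (0 : Euc 2) 1)
    (μ : Measure (Euc d1 × Euc d2)) [IsProbabilityMeasure μ] :
    ∫⁻ t : ℝ, (ENNReal.ofReal |t|) ^ k ∂(μ.map (Tmap g1 g2 θ1 θ2 ψ))
      ≤ ∑ i ∈ Finset.range (k + 1),
          (k : ℝ≥0∞) ^ i * ENNReal.ofReal (r1 + r2) ^ (k - i) *
            ∫⁻ z : Euc d1 × Euc d2,
              (ENNReal.ofReal (l1norm z.1 + l1norm z.2)) ^ i ∂μ :=
  hhrt_pushforward_moment_bound_general d1 d2 k g1 g2 r1 r2 hg1 hg2 θ1 θ2 ψ μ
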